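/- Suppose Ψ = Φ₁ ∨ … ∨ Φ_p where each Φᵢ = (G^-_{[1,bᵢ]} (u^{jᵢ} = cᵢ)) ∧ (F^-_{[1,1]} φᵢ) with bᵢ ≥ 2. If at time k the control input satisfies u_k^{jᵢ} ≠ u_{k−1}^{jᵢ} for every i, then for any state x_{k+1} and control u_{k+1}, the extended trace violates Ψ at time k+1. -/
import Mathlib


inductive PtSTL (σ : Type) : Type where
  | tt : PtSTL σ
  | atom : (σ → Prop) → PtSTL σ
  | neg : PtSTL σ → PtSTL σ
  | conj : PtSTL σ → PtSTL σ → PtSTL σ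
  | since : ℕ → ℕ → PtSTL σ → PtSTL σ → PtSTL σ

/-- Satisfaction of a ptSTL formula by signal `x` at time `k`.
For `since a b`, the witness `j` ranges over `[k-b, k-a] ∩ [0,k]` (bounds in ℤ). -/
def PtSTL.sat {σ : Type} (x : ℕ → σ) : ℕ → PtSTL σ → Prop
  | _, .tt => True
  | k, .atom p => p (x k)
  | k, .neg φ => ¬ PtSTL.sat x k φ
  | k, .conj φ ψ => PtSTL.sat x k φ ∧ PtSTL.sat x k ψ
  | k, .since a b φ ψ => ∃ j : ℕ, (k : ℤ) - (b : ℤ) ≤ (j : ℤ) ∧ (j : ℤ) ≤ (k : ℤ) - (a : ℤ) ∧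
      j ≤ k ∧ PtSTL.sat x j ψ ∧ ∀ l : ℕ, j ≤ l → l ≤ k → PtSTL.sat x l φ

/-- Past eventually `F⁻_{[a,b]} φ := true S_{[a,b]} φ`. -/
def PtSTL.pastF {σ : Type} (a b : ℕ) (φ : PtSTL σ) : PtSTL σ := .since a b .tt φ

/-- Past globally `G⁻_{[a,b]} φ := ¬ F⁻_{[a,b]} ¬ φ`. -/
def PtSTL.pastG {σ : Type} (a b : ℕ) (φ : PtSTL σ) : PtSTL σ := .neg (.since a b .tt (.neg φ))

/-- Disjunction, defined from negation and conjunction. -/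
def PtSTL.or {σ : Type} (φ ψ : PtSTL σ) : PtSTL σ := .neg (.conj (.neg φ) (.neg ψ))

/-- Disjunction of a list of formulas. -/
def PtSTL.disj {σ : Type} (l : List (PtSTL σ)) : PtSTL σ := l.foldr PtSTL.or (.neg .tt)

/-- Length of a ptSTL formula. -/
def PtSTL.len {σ : Type} : PtSTL σ → ℕ
  | .tt => 0
  | .atom _ => 0
  | .neg φ => φ.len
  | .conj φ ψ => max φ.len ψ.len
  | .since _ b φ ψ => b + max φ.len ψ.len

lemma PtSTL.disj_sat {σ : Type} (x : ℕ → σ) (k : ℕ) (l : List (PtSTL σ)) :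
    PtSTL.sat x k (PtSTL.disj l) ↔ ∃ φ ∈ l, PtSTL.sat x k φ := by
  induction l with
  | nil => simp [PtSTL.disj, PtSTL.sat]
  | cons a l ih =>
    simp only [PtSTL.disj, List.foldr] at ih ⊢
    simp only [PtSTL.or, PtSTL.sat, List.mem_cons]
    constructor
    · intro h
      by_cases ha : PtSTL.sat x k a
      · exact ⟨a, Or.inl rfl, ha⟩
      · obtain ⟨φ, hφ, hs⟩ := ih.mp (not_not.mp fun hd => h ⟨ha, hd⟩)
        exact ⟨φ, Or.inr hφ, hs⟩
    · rintro ⟨φ, hφ | hφ, hs⟩ ⟨h1, h2⟩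
      · exact h1 (hφ ▸ hs)
      · exact h2 (ih.mpr ⟨φ, hφ, hs⟩)

/-- Proposition 1, core step: for `Ψ = ⋁ᵢ (G⁻_{[1,bᵢ]}(u^{jᵢ}=cᵢ)) ∧ (F⁻_{[1,1]} φᵢ)`
with each `bᵢ ≥ 2`, if at time `k` the control differs from the previous control in every
controlled coordinate, then any one-step extension of the trace violates `Ψ` at time `k+1`. -/
theorem cause_formula_violated {X : Type} (m p : ℕ) (k : ℕ) (hk : 1 ≤ k)
    (tr : ℕ → X × (Fin m → ℝ))
    (b : Fin p → ℕ) (hb : ∀ i, 2 ≤ b i)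
    (jidx : Fin p → Fin m) (c : Fin p → ℝ) (φ : Fin p → PtSTL (X × (Fin m → ℝ)))
    (hu : ∀ i, (tr k).2 (jidx i) ≠ (tr (k - 1)).2 (jidx i)) :
    ∀ y : ℕ → X × (Fin m → ℝ), (∀ t, t ≤ k → y t = tr t) →
      ¬ PtSTL.sat y (k + 1)
        (PtSTL.disj (List.ofFn (fun i =>
          PtSTL.conj
            (PtSTL.pastG 1 (b i) (PtSTL.atom (fun s => s.2 (jidx i) = c i)))
            (PtSTL.pastF 1 1 (φ i))))) := by
  intro y hy hsat
  rw [PtSTL.disj_sat] at hsat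
  obtain ⟨ψ, hψmem, hψ⟩ := hsat
  rw [List.mem_ofFn] at hψmem
  obtain ⟨i, rfl⟩ := hψmem
  obtain ⟨hG, _⟩ := hψ
  simp only [PtSTL.pastG, PtSTL.sat] at hG
  have hk1 : ((k - 1 : ℕ) : ℤ) = (k : ℤ) - 1 := by
    omega
  have hbi := hb i
  -- value at time k equals c i
  have h1 : (y k).2 (jidx i) = c i := by
    by_contra hne
    exact hG ⟨k, by push_cast; omega, by push_cast; omega, by omega,
      hne, fun l _ _ => trivial⟩
  -- value at time k-1 equals c i
  have h2 : (y (k - 1)).2 (jidx i) = c i := by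
    by_contra hne
    exact hG ⟨k - 1, by rw [hk1]; push_cast; omega, by rw [hk1]; push_cast; omega,
      by omega, hne, fun l _ _ => trivial⟩
  rw [hy k le_rfl] at h1
  rw [hy (k - 1) (by omega)] at h2
  exact hu i (h1.trans h2.symm)
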